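/- Let M be a lightlike submanifold of an indefinite statistical manifold such that the induced connections ∇ and ∇* are dual with respect to g. Then (M, g, ∇) satisfies the Codazzi equation (∇_X g)(Y,Z) = (∇_Y g)(X,Z) if and only if (M, g, ∇*) satisfies the Codazzi equation (∇*_X g)(Y,Z) = (∇*_Y g)(X,Z). -/
import Mathlib


/-- On a lightlike submanifold of an indefinite statistical manifold,
if the induced connections `∇` and `∇*` are dual with respect to the induced metric
`g`, then `(M, g, ∇)` satisfies the Codazzi equation if and only if `(M, g, ∇*)`
satisfies the Codazzi equation. -/
theorem statistical_iff_dual_statistical {V F : Type*} [AddCommGroup V] [CommRing F]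
    (T : V → Prop) (g : V → V → F) (d : V → F → F) (br : V → V → V)
    (nb nbs ind inds hl hs hls hss : V → V → V)
    (hgsymm : ∀ X Y, g X Y = g Y X)
    (hT_ind : ∀ X Y, T X → T Y → T (ind X Y))
    (hT_inds : ∀ X Y, T X → T Y → T (inds X Y))
    (hgauss : ∀ X Y, T X → T Y → nb X Y = ind X Y + hl X Y + hs X Y)
    (hgauss' : ∀ X Y, T X → T Y → nbs X Y = inds X Y + hls X Y + hss X Y)
    (hhs_orth : ∀ X Y Z, T X → T Y → T Z → g (hs X Y) Z = 0 ∧ g Z (hs X Y) = 0)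
    (hhss_orth : ∀ X Y Z, T X → T Y → T Z → g (hss X Y) Z = 0 ∧ g Z (hss X Y) = 0)
    (htf : ∀ X Y, nb X Y - nb Y X = br X Y)
    (htfs : ∀ X Y, nbs X Y - nbs Y X = br X Y)
    (hcod : ∀ X Y Z, d X (g Y Z) - g (nb X Y) Z - g Y (nb X Z)
                   = d Y (g X Z) - g (nb Y X) Z - g X (nb Y Z))
    (hdual : ∀ X Y Z, d X (g Y Z) = g (nb X Y) Z + g Y (nbs X Z))
    (hdual_ind : ∀ X Y Z, T X → T Y → T Z →
        d X (g Y Z) = g (ind X Y) Z + g Y (inds X Z)) :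
    (∀ X Y Z, T X → T Y → T Z →
        d X (g Y Z) - g (ind X Y) Z - g Y (ind X Z)
      = d Y (g X Z) - g (ind Y X) Z - g X (ind Y Z)) ↔
    (∀ X Y Z, T X → T Y → T Z →
        d X (g Y Z) - g (inds X Y) Z - g Y (inds X Z)
      = d Y (g X Z) - g (inds Y X) Z - g X (inds Y Z)) := by
  have key : ∀ X Y Z, T X → T Y → T Z →
      d X (g Y Z) - g (inds X Y) Z - g Y (inds X Z)
        = -(d X (g Y Z) - g (ind X Y) Z - g Y (ind X Z)) := by
    intro X Y Z hX hY hZ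
    have h1 := hdual_ind X Y Z hX hY hZ
    have h2 := hdual_ind X Z Y hX hZ hY
    rw [hgsymm Z Y] at h2
    linear_combination h1 + h2 + hgsymm (ind X Z) Y - hgsymm (inds X Y) Z
  constructor
  · intro h X Y Z hX hY hZ
    rw [key X Y Z hX hY hZ, key Y X Z hY hX hZ, h X Y Z hX hY hZ]
  · intro h X Y Z hX hY hZ
    have := h X Y Z hX hY hZ
    rw [key X Y Z hX hY hZ, key Y X Z hY hX hZ] at this
    exact neg_injective this
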